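/- Suppose β, γ, α, κ₁, κ₃, c are smooth real-valued functions/constants on an interval (with c a nonzero constant) satisfying along a direction derivative D: γκ₃ = βκ₁ + c/4, Dα = β(α + κ₃), Dβ = β² + βκ₁ + c/2, Dγ = κ₁γ + βγ, and the algebraic relation αγ = β². Then c = 0, a contradiction; hence no such configuration with β ≠ 0 exists. -/

import Mathlib

/-!
Differentiating `α γ = β²` gives `α' γ + α γ' = 2 β β'`. Substituting the three Codazzi
relations and then `γ κ₃ = β κ₁ + c/4` and `α γ = β²` collapses this identity to
`(3/4) β c = 0`, which is impossible when `β ≠ 0` and `c ≠ 0`.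
-/

theorem deriv_mul_add_mul_deriv_eq_of_mul_eq_sq {α β γ : ℝ → ℝ} {t : ℝ}
    (hα : DifferentiableAt ℝ α t) (hβ : DifferentiableAt ℝ β t) (hγ : DifferentiableAt ℝ γ t)
    (h : (fun s => α s * γ s) =ᶠ[nhds t] fun s => β s ^ 2) :
    deriv α t * γ t + α t * deriv γ t = 2 * β t * deriv β t := by
  calc deriv α t * γ t + α t * deriv γ t = deriv (fun s => α s * γ s) t :=
        (deriv_fun_mul hα hγ).symm
    _ = deriv (fun s => β s ^ 2) t := h.deriv_eq
    _ = 2 * β t * deriv β t := by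
        rw [deriv_fun_pow hβ 2]
        ring

theorem mul_eq_zero_of_codazzi {a b g k₁ k₃ c a' b' g' : ℝ}
    (h₁ : g * k₃ = b * k₁ + c / 4) (h₂ : a' = b * (a + k₃)) (h₃ : b' = b ^ 2 + b * k₁ + c / 2)
    (h₄ : g' = k₁ * g + b * g) (h₅ : a * g = b ^ 2) (hd : a' * g + a * g' = 2 * b * b') :
    b * c = 0 := by
  subst h₂ h₃ h₄
  linear_combination (4 / 3 : ℝ) * ((2 * b + k₁) * h₅ + b * h₁ - hd)

theorem stmt_11 (c : ℝ) (hc : c ≠ 0) (α β γ κ₁ κ₃ : ℝ → ℝ)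
    (hα : Differentiable ℝ α) (hβ : Differentiable ℝ β) (hγ : Differentiable ℝ γ)
    (hβ0 : ∀ t, β t ≠ 0)
    (h1 : ∀ t, γ t * κ₃ t = β t * κ₁ t + c / 4)
    (h2 : ∀ t, deriv α t = β t * (α t + κ₃ t))
    (h3 : ∀ t, deriv β t = (β t) ^ 2 + β t * κ₁ t + c / 2)
    (h4 : ∀ t, deriv γ t = κ₁ t * γ t + β t * γ t)
    (h5 : ∀ t, α t * γ t = (β t) ^ 2) :
    False := by
  have hd := deriv_mul_add_mul_deriv_eq_of_mul_eq_sq (hα 0) (hβ 0) (hγ 0)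
    (.of_eq (funext h5))
  have hβc : β 0 * c = 0 := mul_eq_zero_of_codazzi (h1 0) (h2 0) (h3 0) (h4 0) (h5 0) hd
  exact mul_ne_zero (hβ0 0) hc hβc
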